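/- arXiv:2004.13234 — 2 statements merged into one kernel-verified Lean document; each statement's English description precedes it below -/
import Mathlib

section
/- For every nonnegative integer ℓ', J(0,ℓ') = 0, and for every nonnegative integer ℓ, J(ℓ,0) = 0. (In particular the first row and first column of the truncated lightcone Hamiltonian of two-dimensional large-N_c QCD vanish, so the ℓ = 0 basis state is an exactly massless eigenstate: the massless pion required by chiral symmetry.) -/
open MeasureTheory Filter Set

/-- The Legendre polynomial `P_ℓ`, via the Rodrigues formula
`P_ℓ(w) = (1/(2^ℓ ℓ!)) (d/dw)^ℓ (w²−1)^ℓ`. -/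
noncomputable def legendreP (ℓ : ℕ) (w : ℝ) : ℝ :=
  ((2 : ℝ) ^ ℓ * Nat.factorial ℓ)⁻¹ * iteratedDeriv ℓ (fun t : ℝ => (t ^ 2 - 1) ^ ℓ) w

/-- `IsJ ℓ ℓ' v` asserts that the quantity
`J(ℓ,ℓ') = ∫₀¹ (PV ∫₀¹ P_ℓ(1−2x₁)(P_{ℓ'}(1−2x₁) − P_{ℓ'}(1−2x₂))/(x₁−x₂)² dx₂) dx₁`
is well defined and equals `v`: there is a function `g` such that for every
`x₁ ∈ (0,1)` the inner principal value (around `x₂ = x₁`) exists and equals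
`g x₁`, `g` is integrable on `(0,1)`, and `∫₀¹ g = v`. -/
def IsJ (ℓ ℓ' : ℕ) (v : ℝ) : Prop :=
  ∃ g : ℝ → ℝ,
    (∀ x₁ ∈ Ioo (0 : ℝ) 1,
      Tendsto (fun δ : ℝ =>
          ∫ x₂ in Ioo (0 : ℝ) 1 \ Ioo (x₁ - δ) (x₁ + δ),
            legendreP ℓ (1 - 2 * x₁) * (legendreP ℓ' (1 - 2 * x₁) - legendreP ℓ' (1 - 2 * x₂))
              / (x₁ - x₂) ^ 2)
        (nhdsWithin 0 (Ioi 0)) (nhds (g x₁))) ∧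
    IntegrableOn g (Ioo (0 : ℝ) 1) ∧
    ∫ x₁ in Ioo (0 : ℝ) 1, g x₁ = v

/-!
The kernel `(P x - P y) / (x - y) ^ 2` is antisymmetric and the region `δ ≤ |x - y|` of the unit
square is symmetric, so by Fubini every δ-truncated double integral vanishes. To pass to the limit
`δ → 0`, split the kernel as `P' x / (x - y)` minus the bounded second divided difference
`P[x, x, y]`. The singular part integrates exactly to
`P' x * (log (max x δ) - log (max (1 - x) δ))`, in which `log δ` cancels as soon as
`δ < min x (1 - x)`; this gives the inner principal value for each `x`, and a bound
`M * |log x - log (1 - x)| + K` uniform in `δ`, so dominated convergence applies. Only `P ∈ C²` is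
used; here `P x = P_ℓ' (1 - 2 x)`. For `J(ℓ, 0)` the numerator vanishes identically, since `P₀ = 1`.
-/

open Topology
open scoped ContDiff

noncomputable def excisedIntegral (f : ℝ → ℝ → ℝ) (δ x : ℝ) : ℝ :=
  ∫ y in Ioo 0 1 \ Ioo (x - δ) (x + δ), f x y

section ExcisedInterval

variable {x y δ : ℝ}

lemma mem_Ioo_sub_add_iff : y ∈ Ioo (x - δ) (x + δ) ↔ |x - y| < δ := by
  rw [← Real.ball_eq_Ioo, Metric.mem_ball, Real.dist_eq, abs_sub_comm]

lemma Ioo_diff_Ioo_eq_union (hx : x ∈ Ioo (0 : ℝ) 1) (hδ : 0 ≤ δ) :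
    Ioo 0 1 \ Ioo (x - δ) (x + δ) = Ioc 0 (x - δ) ∪ Ico (x + δ) 1 := by
  ext y
  simp only [Set.mem_sdiff, mem_Ioo, mem_union, mem_Ioc, mem_Ico, not_and_or, not_lt] at hx ⊢
  constructor
  · rintro ⟨⟨h0, h1⟩, h | h⟩
    · exact .inl ⟨h0, h⟩
    · exact .inr ⟨h, h1⟩
  · rintro (⟨h0, h⟩ | ⟨h, h1⟩)
    · exact ⟨⟨h0, by linarith⟩, .inl h⟩
    · exact ⟨⟨by linarith, h1⟩, .inr h⟩

lemma integrableOn_inv_sub_Ioo_diff_Ioo (hδ : 0 < δ) :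
    IntegrableOn (fun y => (x - y)⁻¹) (Ioo 0 1 \ Ioo (x - δ) (x + δ)) := by
  refine Measure.integrableOn_of_bounded ((measure_mono sdiff_subset).trans_lt measure_Ioo_lt_top).ne
    (by fun_prop) (M := δ⁻¹) ?_
  refine ae_restrict_of_forall_mem (measurableSet_Ioo.diff measurableSet_Ioo) fun y hy => ?_
  have hxy : δ ≤ |x - y| := not_lt.1 (mem_Ioo_sub_add_iff.not.1 hy.2)
  rw [norm_inv, Real.norm_eq_abs]
  exact inv_anti₀ hδ hxy

lemma integral_Ioc_inv_sub (hδ : 0 < δ) :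
    ∫ y in Ioc 0 (x - δ), (x - y)⁻¹ = Real.log (max x δ) - Real.log δ := by
  rcases le_or_gt x δ with hxδ | hδx
  · rw [Ioc_eq_empty (by linarith), setIntegral_empty, max_eq_right hxδ, sub_self]
  · rw [← intervalIntegral.integral_of_le (by linarith),
      intervalIntegral.integral_comp_sub_left (fun t => t⁻¹), sub_sub_cancel, sub_zero,
      integral_inv_of_pos hδ (by linarith), max_eq_left hδx.le,
      Real.log_div (by linarith) hδ.ne']

lemma integral_Ico_inv_sub (hδ : 0 < δ) :
    ∫ y in Ico (x + δ) 1, (x - y)⁻¹ = Real.log δ - Real.log (max (1 - x) δ) := by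
  rcases le_or_gt (1 - x) δ with hxδ | hδx
  · rw [Ico_eq_empty (by linarith), setIntegral_empty, max_eq_right hxδ, sub_self]
  · have hneg : (fun y => (x - y)⁻¹) = fun y => -(y - x)⁻¹ := by
      funext y; rw [← inv_neg, neg_sub]
    rw [integral_Ico_eq_integral_Ioc, ← intervalIntegral.integral_of_le (by linarith), hneg,
      intervalIntegral.integral_neg, intervalIntegral.integral_comp_sub_right (fun t => t⁻¹),
      add_sub_cancel_left, integral_inv_of_pos hδ (by linarith), max_eq_left hδx.le,
      Real.log_div (by linarith) hδ.ne']
    ring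

lemma excisedIntegral_inv_sub (hx : x ∈ Ioo (0 : ℝ) 1) (hδ : 0 < δ) :
    excisedIntegral (fun x y => (x - y)⁻¹) δ x
      = Real.log (max x δ) - Real.log (max (1 - x) δ) := by
  have hint := integrableOn_inv_sub_Ioo_diff_Ioo (x := x) hδ
  rw [Ioo_diff_Ioo_eq_union hx hδ.le, integrableOn_union] at hint
  have hdisj : Disjoint (Ioc (0 : ℝ) (x - δ)) (Ico (x + δ) 1) :=
    disjoint_left.2 fun y h₁ h₂ => by linarith [h₁.2, h₂.1]
  rw [excisedIntegral, Ioo_diff_Ioo_eq_union hx hδ.le,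
    setIntegral_union hdisj measurableSet_Ico hint.1 hint.2, integral_Ioc_inv_sub hδ,
    integral_Ico_inv_sub hδ]
  ring

end ExcisedInterval

lemma tendsto_excisedIntegral {f : ℝ → ℝ → ℝ} {x : ℝ} (hf : IntegrableOn (f x) (Ioo 0 1)) :
    Tendsto (fun δ => excisedIntegral f δ x) (𝓝[>] 0) (𝓝 (∫ y in Ioo 0 1, f x y)) := by
  have hind : ∀ δ,
      excisedIntegral f δ x = ∫ y in Ioo 0 1, (Ioo (x - δ) (x + δ))ᶜ.indicator (f x) y :=
    fun δ => by rw [setIntegral_indicator measurableSet_Ioo.compl, ← sdiff_eq, excisedIntegral]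
  simp_rw [hind]
  refine tendsto_integral_filter_of_dominated_convergence (fun y => ‖f x y‖)
    (.of_forall fun δ => hf.aestronglyMeasurable.indicator measurableSet_Ioo.compl)
    (.of_forall fun δ => .of_forall fun y => norm_indicator_le_norm_self _ _) hf.norm ?_
  filter_upwards [ae_restrict_of_ae (Measure.ae_ne volume x)] with y hy
  refine tendsto_const_nhds.congr' ?_
  filter_upwards [Ioo_mem_nhdsGT (abs_pos.2 (sub_ne_zero.2 hy.symm))] with δ hδ
  rw [indicator_of_mem (mem_Ioo_sub_add_iff.not.2 hδ.2.not_gt)]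

lemma integrableOn_log_sub_log_one_sub :
    IntegrableOn (fun x => Real.log x - Real.log (1 - x)) (Ioo 0 1) := by
  have hlog : IntegrableOn Real.log (Ioo 0 1) :=
    (intervalIntegrable_iff_integrableOn_Ioo_of_le zero_le_one).1
      intervalIntegral.intervalIntegrable_log'
  have hlog' : IntegrableOn (fun x => Real.log (1 - x)) (Ioo 0 1) := by
    have := (intervalIntegral.intervalIntegrable_log' (a := 1) (b := 0)).comp_sub_left 1
    rw [sub_self, sub_zero, intervalIntegrable_iff_integrableOn_Ioo_of_le zero_le_one] at this
    exact this
  exact hlog.sub hlog'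

lemma abs_log_max_sub_log_max_le {a b c : ℝ} (ha : 0 < a) (hb : 0 < b) (hc : 0 < c) :
    |Real.log (max a c) - Real.log (max b c)| ≤ |Real.log a - Real.log b| := by
  have hlog := Real.strictMonoOn_log.monotoneOn
  rw [hlog.map_max ha hc, hlog.map_max hb hc]
  exact abs_max_sub_max_le_abs _ _ _

lemma integral_prod_self_eq_zero_of_swap_eq_neg {α E : Type*} [MeasurableSpace α]
    [NormedAddCommGroup E] [NormedSpace ℝ E] {μ : Measure α} [SFinite μ] {f : α × α → E}
    (hf : ∀ p, f p.swap = -f p) : ∫ p, f p ∂μ.prod μ = 0 := by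
  have h := integral_prod_swap (μ := μ) (ν := μ) f
  simp_rw [hf, integral_neg] at h
  have htwo : (2 : ℝ) • ∫ p, f p ∂μ.prod μ = 0 := by
    nth_rw 1 [two_smul, ← h, neg_add_cancel]
  exact (smul_eq_zero.1 htwo).resolve_left two_ne_zero

section ExcisedSquare

variable {f : ℝ → ℝ → ℝ} {δ : ℝ}

def excisedSquare (δ : ℝ) : Set (ℝ × ℝ) := Ioo 0 1 ×ˢ Ioo 0 1 ∩ {p | δ ≤ |p.1 - p.2|}

lemma measurableSet_excisedSquare : MeasurableSet (excisedSquare δ) :=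
  (measurableSet_Ioo.prod measurableSet_Ioo).inter (measurableSet_le measurable_const (by fun_prop))

lemma swap_mem_excisedSquare {p : ℝ × ℝ} : p.swap ∈ excisedSquare δ ↔ p ∈ excisedSquare δ := by
  simp only [excisedSquare, mem_inter_iff, mem_prod, mem_ofPred_eq, Prod.fst_swap, Prod.snd_swap,
    abs_sub_comm p.2]
  tauto

lemma mk_mem_excisedSquare {x y : ℝ} :
    (x, y) ∈ excisedSquare δ ↔ x ∈ Ioo 0 1 ∧ y ∈ Ioo 0 1 \ Ioo (x - δ) (x + δ) := by
  simp only [excisedSquare, mem_inter_iff, mem_prod, mem_ofPred_eq, Set.mem_sdiff,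
    mem_Ioo_sub_add_iff, not_lt]
  tauto

lemma integral_indicator_excisedSquare (x : ℝ) :
    ∫ y, (excisedSquare δ).indicator (Function.uncurry f) (x, y)
      = (Ioo 0 1).indicator (excisedIntegral f δ) x := by
  by_cases hx : x ∈ Ioo 0 1
  · have hslice : (fun y => (excisedSquare δ).indicator (Function.uncurry f) (x, y))
        = (Ioo 0 1 \ Ioo (x - δ) (x + δ)).indicator (f x) := by
      funext y
      by_cases hy : y ∈ Ioo 0 1 \ Ioo (x - δ) (x + δ)
      · rw [indicator_of_mem (mk_mem_excisedSquare.2 ⟨hx, hy⟩), indicator_of_mem hy]; rfl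
      · rw [indicator_of_notMem (mk_mem_excisedSquare.not.2 (by tauto)), indicator_of_notMem hy]
    rw [hslice, integral_indicator (measurableSet_Ioo.diff measurableSet_Ioo),
      indicator_of_mem hx, excisedIntegral]
  · simp [indicator, mk_mem_excisedSquare, hx]

lemma integrableOn_excisedIntegral
    (hf : Integrable ((excisedSquare δ).indicator (Function.uncurry f)) (volume.prod volume)) :
    IntegrableOn (excisedIntegral f δ) (Ioo 0 1) := by
  rw [← integrable_indicator_iff measurableSet_Ioo]
  simpa only [integral_indicator_excisedSquare] using hf.integral_prod_left

lemma integral_excisedIntegral_eq_zero (hanti : ∀ x y, f y x = -f x y)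
    (hf : Integrable ((excisedSquare δ).indicator (Function.uncurry f)) (volume.prod volume)) :
    ∫ x in Ioo 0 1, excisedIntegral f δ x = 0 := by
  rw [← integral_indicator measurableSet_Ioo]
  simp_rw [← integral_indicator_excisedSquare]
  rw [← integral_prod _ hf]
  refine integral_prod_self_eq_zero_of_swap_eq_neg fun p => ?_
  by_cases hp : p ∈ excisedSquare δ
  · rw [indicator_of_mem (swap_mem_excisedSquare.2 hp), indicator_of_mem hp]
    exact hanti p.1 p.2
  · rw [indicator_of_notMem (swap_mem_excisedSquare.not.2 hp), indicator_of_notMem hp, neg_zero]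

end ExcisedSquare

noncomputable def secondDivDiff (P : ℝ → ℝ) (x y : ℝ) : ℝ :=
  (P y - P x - deriv P x * (y - x)) / (y - x) ^ 2

/-- Also true at `y = x`, where both sides are `0` by the convention `a / 0 = 0`. -/
lemma div_sub_sq_eq_deriv_mul_inv_sub_secondDivDiff (P : ℝ → ℝ) (x y : ℝ) :
    (P x - P y) / (x - y) ^ 2 = deriv P x * (x - y)⁻¹ - secondDivDiff P x y := by
  rcases eq_or_ne x y with rfl | hxy
  · simp [secondDivDiff]
  · have h₁ : x - y ≠ 0 := sub_ne_zero.2 hxy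
    have h₂ : y - x ≠ 0 := sub_ne_zero.2 hxy.symm
    rw [secondDivDiff]
    field_simp
    ring

lemma ContDiff.exists_abs_secondDivDiff_le {P : ℝ → ℝ} (hP : ContDiff ℝ 2 P) {s : Set ℝ}
    (hs : Convex ℝ s) (hs' : IsCompact s) :
    ∃ K, ∀ x ∈ s, ∀ y ∈ s, |secondDivDiff P x y| ≤ K := by
  obtain ⟨K, hK⟩ := (hP.deriv' (n := 1)).contDiffOn.exists_lipschitzOnWith one_ne_zero hs hs'
  refine ⟨K, fun x hx y hy => ?_⟩
  have hderiv : ∀ z ∈ uIcc x y, HasDerivWithinAt (fun z => P z - deriv P x * z)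
      (deriv P z - deriv P x) (uIcc x y) z := fun z _ =>
    (((hP.differentiable two_ne_zero) z).hasDerivAt.sub
      ((hasDerivAt_id z).const_mul (deriv P x)) |>.hasDerivWithinAt).congr_deriv (by simp)
  have hbound : ∀ z ∈ uIcc x y, ‖deriv P z - deriv P x‖ ≤ K * |y - x| := fun z hz =>
    (hK.dist_le_mul z (hs.ordConnected.uIcc_subset hx hy hz) x hx).trans
      (mul_le_mul_of_nonneg_left (abs_sub_left_of_mem_uIcc hz) K.coe_nonneg)
  have hmvt := (convex_uIcc x y).norm_image_sub_le_of_norm_hasDerivWithin_le hderiv hbound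
    left_mem_uIcc right_mem_uIcc
  rw [secondDivDiff, abs_div, abs_of_nonneg (sq_nonneg (y - x)), ← sq_abs]
  rcases eq_or_ne (y - x) 0 with hxy | hxy
  · simp [hxy]
  · rw [div_le_iff₀ (by positivity)]
    rw [Real.norm_eq_abs, Real.norm_eq_abs] at hmvt
    calc |P y - P x - deriv P x * (y - x)| = |P y - deriv P x * y - (P x - deriv P x * x)| := by
          congr 1; ring
      _ ≤ K * |y - x| * |y - x| := hmvt
      _ = K * |y - x| ^ 2 := by ring

section DividedDifference

variable {P : ℝ → ℝ} {M K x δ : ℝ}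

noncomputable def pvIntegral (P : ℝ → ℝ) (x : ℝ) : ℝ :=
  deriv P x * (Real.log x - Real.log (1 - x)) - ∫ y in Ioo 0 1, secondDivDiff P x y

lemma integrableOn_secondDivDiff (hPm : Measurable P)
    (hK : ∀ x ∈ Icc (0 : ℝ) 1, ∀ y ∈ Icc (0 : ℝ) 1, |secondDivDiff P x y| ≤ K)
    (hx : x ∈ Icc (0 : ℝ) 1) : IntegrableOn (secondDivDiff P x) (Ioo 0 1) := by
  refine Measure.integrableOn_of_bounded measure_Ioo_lt_top.ne
    (Measurable.aestronglyMeasurable (by unfold secondDivDiff; fun_prop)) (M := K) ?_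
  exact ae_restrict_of_forall_mem measurableSet_Ioo fun y hy => hK x hx y (Ioo_subset_Icc_self hy)

lemma excisedIntegral_div_sub_sq (hPm : Measurable P)
    (hK : ∀ x ∈ Icc (0 : ℝ) 1, ∀ y ∈ Icc (0 : ℝ) 1, |secondDivDiff P x y| ≤ K)
    (hx : x ∈ Ioo (0 : ℝ) 1) (hδ : 0 < δ) :
    excisedIntegral (fun x y => (P x - P y) / (x - y) ^ 2) δ x
      = deriv P x * (Real.log (max x δ) - Real.log (max (1 - x) δ))
        - excisedIntegral (secondDivDiff P) δ x := by
  have hr := (integrableOn_secondDivDiff hPm hK (Ioo_subset_Icc_self hx)).mono_set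
    (sdiff_subset (t := Ioo (x - δ) (x + δ)))
  rw [← excisedIntegral_inv_sub hx hδ, excisedIntegral, excisedIntegral, excisedIntegral]
  simp_rw [div_sub_sq_eq_deriv_mul_inv_sub_secondDivDiff]
  rw [integral_sub ((integrableOn_inv_sub_Ioo_diff_Ioo hδ).const_mul _) hr, integral_const_mul]

lemma tendsto_excisedIntegral_div_sub_sq (hPm : Measurable P)
    (hK : ∀ x ∈ Icc (0 : ℝ) 1, ∀ y ∈ Icc (0 : ℝ) 1, |secondDivDiff P x y| ≤ K)
    (hx : x ∈ Ioo (0 : ℝ) 1) :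
    Tendsto (fun δ => excisedIntegral (fun x y => (P x - P y) / (x - y) ^ 2) δ x) (𝓝[>] 0)
      (𝓝 (pvIntegral P x)) := by
  refine (tendsto_const_nhds.sub (tendsto_excisedIntegral
    (integrableOn_secondDivDiff hPm hK (Ioo_subset_Icc_self hx)))).congr' ?_
  filter_upwards [Ioo_mem_nhdsGT (lt_min hx.1 (sub_pos.2 hx.2))] with δ hδ
  have hδx : δ ≤ x := hδ.2.le.trans (min_le_left _ _)
  have hδx' : δ ≤ 1 - x := hδ.2.le.trans (min_le_right _ _)
  rw [excisedIntegral_div_sub_sq hPm hK hx hδ.1, max_eq_left hδx, max_eq_left hδx']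

lemma abs_setIntegral_secondDivDiff_le
    (hK : ∀ x ∈ Icc (0 : ℝ) 1, ∀ y ∈ Icc (0 : ℝ) 1, |secondDivDiff P x y| ≤ K)
    (hx : x ∈ Icc (0 : ℝ) 1) {s : Set ℝ} (hs : s ⊆ Ioo 0 1) :
    |∫ y in s, secondDivDiff P x y| ≤ K := by
  have hK0 : 0 ≤ K := by simpa [secondDivDiff] using hK x hx x hx
  have hvol : volume.real s ≤ 1 := (measureReal_mono hs measure_Ioo_lt_top.ne).trans (by simp)
  rw [← Real.norm_eq_abs]
  refine (norm_setIntegral_le_of_norm_le_const ((measure_mono hs).trans_lt measure_Ioo_lt_top)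
    fun y hy => (Real.norm_eq_abs _).trans_le (hK x hx y (Ioo_subset_Icc_self (hs hy)))).trans ?_
  simpa using mul_le_mul_of_nonneg_left hvol hK0

lemma abs_excisedIntegral_div_sub_sq_le (hPm : Measurable P)
    (hM : ∀ x ∈ Icc (0 : ℝ) 1, |deriv P x| ≤ M)
    (hK : ∀ x ∈ Icc (0 : ℝ) 1, ∀ y ∈ Icc (0 : ℝ) 1, |secondDivDiff P x y| ≤ K)
    (hx : x ∈ Ioo (0 : ℝ) 1) (hδ : 0 < δ) :
    |excisedIntegral (fun x y => (P x - P y) / (x - y) ^ 2) δ x|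
      ≤ M * |Real.log x - Real.log (1 - x)| + K := by
  have hx' := Ioo_subset_Icc_self hx
  have hlog := abs_log_max_sub_log_max_le hx.1 (sub_pos.2 hx.2) hδ
  have hrem : |excisedIntegral (secondDivDiff P) δ x| ≤ K :=
    abs_setIntegral_secondDivDiff_le hK hx' sdiff_subset
  rw [excisedIntegral_div_sub_sq hPm hK hx hδ]
  calc _ ≤ |deriv P x| * |Real.log (max x δ) - Real.log (max (1 - x) δ)|
        + |excisedIntegral (secondDivDiff P) δ x| := by rw [← abs_mul]; exact abs_sub _ _
    _ ≤ M * |Real.log x - Real.log (1 - x)| + K :=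
        add_le_add (mul_le_mul (hM x hx') hlog (abs_nonneg _) ((abs_nonneg _).trans (hM x hx')))
          hrem

lemma integrable_indicator_excisedSquare_div_sub_sq (hPm : Measurable P)
    (hM : ∀ x ∈ Icc (0 : ℝ) 1, |deriv P x| ≤ M)
    (hK : ∀ x ∈ Icc (0 : ℝ) 1, ∀ y ∈ Icc (0 : ℝ) 1, |secondDivDiff P x y| ≤ K) (hδ : 0 < δ) :
    Integrable ((excisedSquare δ).indicator
      (Function.uncurry fun x y => (P x - P y) / (x - y) ^ 2)) (volume.prod volume) := by
  rw [integrable_indicator_iff measurableSet_excisedSquare]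
  have hvol : (volume.prod volume) (excisedSquare δ) ≠ ⊤ := by
    refine ((measure_mono inter_subset_left).trans_lt ?_).ne
    rw [Measure.prod_prod]
    exact ENNReal.mul_lt_top measure_Ioo_lt_top measure_Ioo_lt_top
  refine Measure.integrableOn_of_bounded hvol
    (Measurable.aestronglyMeasurable (by unfold Function.uncurry; fun_prop)) (M := M * δ⁻¹ + K) ?_
  refine ae_restrict_of_forall_mem measurableSet_excisedSquare fun p hp => ?_
  obtain ⟨⟨hx, hy⟩, hxy⟩ := hp
  have hx' := Ioo_subset_Icc_self hx
  rw [Function.uncurry_apply_pair, Real.norm_eq_abs,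
    div_sub_sq_eq_deriv_mul_inv_sub_secondDivDiff]
  calc _ ≤ |deriv P p.1| * |(p.1 - p.2)⁻¹| + |secondDivDiff P p.1 p.2| := by
        rw [← abs_mul]; exact abs_sub _ _
    _ ≤ M * δ⁻¹ + K := by
        refine add_le_add (mul_le_mul (hM _ hx') ?_ (abs_nonneg _)
          ((abs_nonneg _).trans (hM _ hx'))) (hK _ hx' _ (Ioo_subset_Icc_self hy))
        rw [abs_inv]
        exact inv_anti₀ hδ hxy

lemma integrableOn_pvIntegral (hPm : Measurable P) (hM : ∀ x ∈ Icc (0 : ℝ) 1, |deriv P x| ≤ M)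
    (hK : ∀ x ∈ Icc (0 : ℝ) 1, ∀ y ∈ Icc (0 : ℝ) 1, |secondDivDiff P x y| ≤ K) :
    IntegrableOn (pvIntegral P) (Ioo 0 1) := by
  have hmain : IntegrableOn (fun x => deriv P x * (Real.log x - Real.log (1 - x))) (Ioo 0 1) :=
    integrableOn_log_sub_log_one_sub.bdd_mul (measurable_deriv P).aestronglyMeasurable
      (ae_restrict_of_forall_mem measurableSet_Ioo fun x hx => hM x (Ioo_subset_Icc_self hx))
  have hrem : IntegrableOn (fun x => ∫ y in Ioo 0 1, secondDivDiff P x y) (Ioo 0 1) := by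
    refine Measure.integrableOn_of_bounded measure_Ioo_lt_top.ne
      (StronglyMeasurable.integral_prod_right (f := secondDivDiff P)
        (Measurable.stronglyMeasurable ?_)).aestronglyMeasurable (M := K) ?_
    · unfold Function.uncurry secondDivDiff; fun_prop
    · exact ae_restrict_of_forall_mem measurableSet_Ioo fun x hx =>
        (Real.norm_eq_abs _).trans_le
          (abs_setIntegral_secondDivDiff_le hK (Ioo_subset_Icc_self hx) subset_rfl)
  exact hmain.sub hrem

end DividedDifference

theorem ContDiff.exists_pv_div_sub_sq_integral_eq_zero {P : ℝ → ℝ} (hP : ContDiff ℝ 2 P) :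
    ∃ g : ℝ → ℝ,
      (∀ x ∈ Ioo (0 : ℝ) 1,
        Tendsto (fun δ => ∫ y in Ioo 0 1 \ Ioo (x - δ) (x + δ), (P x - P y) / (x - y) ^ 2)
          (𝓝[>] 0) (𝓝 (g x))) ∧
      IntegrableOn g (Ioo 0 1) ∧ ∫ x in Ioo 0 1, g x = 0 := by
  obtain ⟨M, hM⟩ :=
    isCompact_Icc.exists_bound_of_continuousOn (hP.continuous_deriv one_le_two).continuousOn
  simp only [Real.norm_eq_abs] at hM
  obtain ⟨K, hK⟩ := hP.exists_abs_secondDivDiff_le (convex_Icc 0 1) isCompact_Icc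
  have hPm := hP.continuous.measurable
  set F := excisedIntegral fun x y => (P x - P y) / (x - y) ^ 2
  have hlim : ∀ x ∈ Ioo (0 : ℝ) 1, Tendsto (F · x) (𝓝[>] 0) (𝓝 (pvIntegral P x)) :=
    fun x hx => tendsto_excisedIntegral_div_sub_sq hPm hK hx
  have hdom : Tendsto (fun δ => ∫ x in Ioo 0 1, F δ x) (𝓝[>] 0)
      (𝓝 (∫ x in Ioo 0 1, pvIntegral P x)) := by
    refine tendsto_integral_filter_of_dominated_convergence
      (fun x => M * |Real.log x - Real.log (1 - x)| + K) ?_ ?_ ?_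
      (ae_restrict_of_forall_mem measurableSet_Ioo hlim)
    · filter_upwards [self_mem_nhdsWithin] with δ hδ
      exact (integrableOn_excisedIntegral
        (integrable_indicator_excisedSquare_div_sub_sq hPm hM hK hδ)).aestronglyMeasurable
    · filter_upwards [self_mem_nhdsWithin] with δ hδ
      exact ae_restrict_of_forall_mem measurableSet_Ioo fun x hx =>
        (Real.norm_eq_abs _).trans_le (abs_excisedIntegral_div_sub_sq_le hPm hM hK hx hδ)
    · exact (integrableOn_log_sub_log_one_sub.abs.const_mul M).add
        (integrableOn_const measure_Ioo_lt_top.ne)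
  refine ⟨pvIntegral P, hlim, integrableOn_pvIntegral hPm hM hK,
    tendsto_nhds_unique hdom (tendsto_const_nhds.congr' ?_)⟩
  filter_upwards [self_mem_nhdsWithin] with δ hδ
  exact (integral_excisedIntegral_eq_zero (fun x y => by ring)
    (integrable_indicator_excisedSquare_div_sub_sq hPm hM hK hδ)).symm

lemma legendreP_zero : legendreP 0 = fun _ => 1 := by
  funext w
  simp [legendreP]

lemma contDiff_legendreP (ℓ : ℕ) : ContDiff ℝ ∞ (legendreP ℓ) := by
  unfold legendreP
  rw [iteratedDeriv_eq_iterate]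
  exact contDiff_const.mul
    (ContDiff.iterate_deriv ℓ (f := fun t : ℝ => (t ^ 2 - 1) ^ ℓ) (by fun_prop))

/-- The first row and the first column of the truncated lightcone Hamiltonian of
2D large-`N_c` QCD vanish: `J(0,ℓ') = 0` for all `ℓ'` and `J(ℓ,0) = 0` for all
`ℓ` (the massless pion). -/
theorem J_first_row_and_column_vanish :
    (∀ ℓ' : ℕ, IsJ 0 ℓ' 0) ∧ (∀ ℓ : ℕ, IsJ ℓ 0 0) := by
  refine ⟨fun ℓ' => ?_, fun ℓ => ⟨0, fun x _ => ?_, integrableOn_zero, by simp⟩⟩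
  · have hP : ContDiff ℝ 2 (fun x => legendreP ℓ' (1 - 2 * x)) :=
      contDiff_infty.1 ((contDiff_legendreP ℓ').comp (by fun_prop)) 2
    simpa only [IsJ, legendreP_zero, one_mul] using hP.exists_pv_div_sub_sq_integral_eq_zero
  · simp [legendreP_zero]
end

section
/- For all ℓ, ℓ' ∈ {0,1,2,3}, the quantity √((2ℓ+1)(2ℓ'+1))·J(ℓ,ℓ') equals the (ℓ,ℓ') entry of the 4×4 matrix with rows (0, 0, 0, 0), (0, 6, 0, √(7/3)), (0, 0, 15, 0), (0, √(7/3), 0, 77/3). Equivalently: J(1,1) = 2, J(2,2) = 3, J(3,3) = 11/3, J(1,3) = J(3,1) = 1/3, and all remaining J(ℓ,ℓ') with ℓ, ℓ' ≤ 3 vanish. (This is the truncated lightcone Hamiltonian of two-dimensional large-N_c QCD at truncation Δ_max = 4, in units of g²N_c/π.) -/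
/-!
Via Rodrigues' formula, `x ↦ P_ℓ(1 - 2x)` is the shifted Legendre polynomial, of degree `ℓ`.
For a cubic `f`, Taylor expansion at `x₁` gives
`(f x₁ - f x₂) / (x₁ - x₂)² = f'(x₁) / (x₁ - x₂) - f''(x₁) / 2 + f'''(x₁) (x₁ - x₂) / 6`,
a simple pole plus a linear function of `x₂`; the principal value of the pole over `(0, 1)` is
`f'(x₁) (log x₁ - log (1 - x₁))`. The outer integral then only involves the moments
`∫₀¹ xᵏ (log x - log (1 - x)) dx = H_k / (k + 1)`, so for `ℓ' ≤ 3` the quantity `J(ℓ, ℓ')` is an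
explicit rational expression in the coefficients of the two shifted Legendre polynomials.
-/

open MeasureTheory Filter Set

open Polynomial Real Finset Topology

theorem Polynomial.iteratedDeriv_eval {𝕜 : Type*} [NontriviallyNormedField 𝕜] (p : 𝕜[X])
    (n : ℕ) (x : 𝕜) : iteratedDeriv n (fun x => p.eval x) x = (derivative^[n] p).eval x := by
  induction n generalizing x with
  | zero => simp
  | succ n ih =>
    have ih' : iteratedDeriv n (fun x => p.eval x) = fun x => (derivative^[n] p).eval x := by
      funext y; exact ih y
    rw [iteratedDeriv_succ, ih', Function.iterate_succ_apply', Polynomial.deriv]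

theorem legendreP_one_sub_two_mul (ℓ : ℕ) (x : ℝ) :
    legendreP ℓ (1 - 2 * x) = aeval x (shiftedLegendre ℓ) := by
  set F : ℝ → ℝ := fun t => (t ^ 2 - 1) ^ ℓ
  set φ : ℤ[X] →+* ℝ[X] := mapRingHom (Int.castRingHom ℝ)
  have h_chain : iteratedDeriv ℓ (fun y => F (1 - 2 * y)) x
      = (-2) ^ ℓ * iteratedDeriv ℓ F (1 - 2 * x) := by
    rw [iteratedDeriv_comp_const_mul (by fun_prop : ContDiff ℝ ℓ fun y => F (1 - y)),
      iteratedDeriv_comp_const_sub]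
    simp only [smul_eq_mul, ← mul_assoc, ← mul_pow]
    norm_num
  have h_poly :
      (fun y => F (1 - 2 * y)) = fun y => (-4) ^ ℓ * (φ (X ^ ℓ * (1 - X) ^ ℓ)).eval y := by
    ext y
    simp [F, φ, ← mul_pow]
    ring_nf
  have h_rodrigues : (derivative^[ℓ] (φ (X ^ ℓ * (1 - X) ^ ℓ))).eval x
      = ℓ.factorial * (φ (shiftedLegendre ℓ)).eval x := by
    simp only [φ, coe_mapRingHom]
    rw [iterate_derivative_map, ← factorial_mul_shiftedLegendre_eq, Polynomial.map_mul, eval_mul,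
      Polynomial.map_natCast, eval_natCast]
  rw [h_poly, iteratedDeriv_const_mul_field, Polynomial.iteratedDeriv_eval, h_rodrigues,
    show (-4 : ℝ) ^ ℓ = (-2) ^ ℓ * 2 ^ ℓ by rw [← mul_pow]; norm_num, mul_assoc] at h_chain
  rw [legendreP, ← mul_left_cancel₀ (pow_ne_zero ℓ (by norm_num : (-2 : ℝ) ≠ 0)) h_chain,
    aeval_def, eval₂_eq_eval_map, algebraMap_int_eq]
  simp [φ]
  field_simp

theorem legendreP_one_sub_two_mul_eq_sum {ℓ n : ℕ} (h : ℓ < n) (x : ℝ) :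
    legendreP ℓ (1 - 2 * x) = ∑ k ∈ range n, ((shiftedLegendre ℓ).coeff k : ℝ) * x ^ k := by
  rw [legendreP_one_sub_two_mul, aeval_eq_sum_range' (by simpa using h)]
  simp [zsmul_eq_mul]

theorem Set.Ioo_diff_Ioo_eq_Ioc_union_Ico {α : Type*} [LinearOrder α] {a b c d : α} (hac : a ≤ c)
    (hcd : c < d) (hdb : d ≤ b) :
    Ioo a b \ Ioo c d = Ioc a c ∪ Ico d b := by
  ext y
  simp only [Set.mem_sdiff, mem_Ioo, mem_union, mem_Ioc, mem_Ico]
  grind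

theorem integral_Ioo_diff_Ioo_eq_of_hasDerivAt {a b c δ : ℝ} {F φ : ℝ → ℝ} (hδ : 0 < δ)
    (ha : a ≤ c - δ) (hb : c + δ ≤ b)
    (hF : ∀ y ≠ c, HasDerivAt F (φ y) y) (hφ : ContinuousOn φ {c}ᶜ) :
    ∫ y in Ioo a b \ Ioo (c - δ) (c + δ), φ y = F b - F a - (F (c + δ) - F (c - δ)) := by
  have hleft : Icc a (c - δ) ⊆ {c}ᶜ := fun y hy (h : y = c) => by linarith [hy.2]
  have hright : Icc (c + δ) b ⊆ {c}ᶜ := fun y hy (h : y = c) => by linarith [hy.1]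
  have hI₁ : IntegrableOn φ (Icc a (c - δ)) := (hφ.mono hleft).integrableOn_Icc
  have hI₂ : IntegrableOn φ (Icc (c + δ) b) := (hφ.mono hright).integrableOn_Icc
  have hFTC₁ : ∫ y in a..c - δ, φ y = F (c - δ) - F a :=
    intervalIntegral.integral_eq_sub_of_hasDerivAt
      (fun y hy => hF y (hleft (by rwa [uIcc_of_le ha] at hy)))
      ((intervalIntegrable_iff_integrableOn_Icc_of_le ha).mpr hI₁)
  have hFTC₂ : ∫ y in c + δ..b, φ y = F b - F (c + δ) :=
    intervalIntegral.integral_eq_sub_of_hasDerivAt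
      (fun y hy => hF y (hright (by rwa [uIcc_of_le hb] at hy)))
      ((intervalIntegrable_iff_integrableOn_Icc_of_le hb).mpr hI₂)
  have hdisj : Disjoint (Ioc a (c - δ)) (Ico (c + δ) b) :=
    Set.disjoint_left.mpr fun y hy₁ hy₂ => by linarith [hy₁.2, hy₂.1]
  rw [Set.Ioo_diff_Ioo_eq_Ioc_union_Ico ha (by linarith) hb,
    setIntegral_union hdisj measurableSet_Ico (hI₁.mono_set Ioc_subset_Icc_self)
      (hI₂.mono_set Ico_subset_Icc_self),
    integral_Ico_eq_integral_Ioo, ← integral_Ioc_eq_integral_Ioo,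
    ← intervalIntegral.integral_of_le ha, ← intervalIntegral.integral_of_le hb, hFTC₁, hFTC₂]
  ring

/-- Since `Real.log (-t) = Real.log t`, `-A * log (c - y)` is an antiderivative of
`A * (c - y)⁻¹` on both sides of `c`, and its values at `c ± δ` cancel. -/
theorem tendsto_integral_Ioo_diff_Ioo_inv_sub_add_linear {a b c : ℝ} (hc : c ∈ Ioo a b)
    (A r₀ r₁ : ℝ) {f : ℝ → ℝ}
    (hf : ∀ y ∈ Ioo a b, y ≠ c → f y = A * (c - y)⁻¹ + (r₀ + r₁ * y)) :
    Tendsto (fun δ => ∫ y in Ioo a b \ Ioo (c - δ) (c + δ), f y) (𝓝[>] 0)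
      (𝓝 (A * (log (c - a) - log (b - c)) + (r₀ * (b - a) + r₁ * (b ^ 2 - a ^ 2) / 2))) := by
  set φ : ℝ → ℝ := fun y => A * (c - y)⁻¹ + (r₀ + r₁ * y)
  set F : ℝ → ℝ := fun y => -A * log (c - y) + (r₀ * y + r₁ / 2 * y ^ 2)
  have hF : ∀ y ≠ c, HasDerivAt F (φ y) y := by
    intro y hy
    have hcy : c - y ≠ 0 := sub_ne_zero.mpr (Ne.symm hy)
    have h := ((((hasDerivAt_id y).const_sub c).log hcy).const_mul (-A)).add
      (((hasDerivAt_id y).const_mul r₀).add ((hasDerivAt_pow 2 y).const_mul (r₁ / 2)))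
    refine h.congr_deriv ?_
    simp only [φ, id]
    field_simp
    ring
  have hφ : ContinuousOn φ {c}ᶜ := by
    refine (continuousOn_const.mul (ContinuousOn.inv₀ (by fun_prop) ?_)).add (by fun_prop)
    exact fun y hy => sub_ne_zero.mpr (Ne.symm hy)
  have h_eq : ∀ δ ∈ Ioo 0 (min (c - a) (b - c)),
      ∫ y in Ioo a b \ Ioo (c - δ) (c + δ), f y
        = A * (log (c - a) - log (b - c)) + (r₀ * (b - a) + r₁ * (b ^ 2 - a ^ 2) / 2)
          - 2 * (r₀ + r₁ * c) * δ := by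
    rintro δ ⟨hδ, hδm⟩
    have ha : a ≤ c - δ := by linarith [min_le_left (c - a) (b - c)]
    have hb : c + δ ≤ b := by linarith [min_le_right (c - a) (b - c)]
    rw [setIntegral_congr_fun (measurableSet_Ioo.diff measurableSet_Ioo)
      (fun y hy => hf y hy.1 fun h => hy.2 (by subst h; constructor <;> linarith)),
      integral_Ioo_diff_Ioo_eq_of_hasDerivAt hδ ha hb hF hφ]
    simp only [F, show c - b = -(b - c) by ring, show c - (c + δ) = -δ by ring,
      show c - (c - δ) = δ by ring, log_neg_eq_log]
    ring
  have h_lim : Tendsto (fun δ : ℝ => A * (log (c - a) - log (b - c))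
      + (r₀ * (b - a) + r₁ * (b ^ 2 - a ^ 2) / 2) - 2 * (r₀ + r₁ * c) * δ) (𝓝[>] 0)
      (𝓝 (A * (log (c - a) - log (b - c)) + (r₀ * (b - a) + r₁ * (b ^ 2 - a ^ 2) / 2))) := by
    refine tendsto_nhdsWithin_of_tendsto_nhds ((Continuous.tendsto' ?_ 0 _ (by simp)))
    fun_prop
  refine h_lim.congr' ?_
  filter_upwards [Ioo_mem_nhdsGT (lt_min (sub_pos.mpr hc.1) (sub_pos.mpr hc.2))] with δ hδ
  exact (h_eq δ hδ).symm

theorem intervalIntegrable_log_sub_log_one_sub (a b : ℝ) :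
    IntervalIntegrable (fun x => log x - log (1 - x)) volume a b := by
  have h := (intervalIntegral.intervalIntegrable_log' (a := 1 - a) (b := 1 - b)).comp_sub_left 1
  simp only [sub_sub_cancel] at h
  exact intervalIntegral.intervalIntegrable_log'.sub h

theorem integral_pow_mul_log_sub_log_one_sub (k : ℕ) :
    ∫ x in (0 : ℝ)..1, x ^ k * (log x - log (1 - x)) = harmonic k / (k + 1) := by
  set G : ℝ → ℝ := fun x => (x ^ (k + 1) * log x - (x ^ (k + 1) - 1) * log (1 - x)
    + ∑ j ∈ range (k + 1), x ^ (j + 1) / (j + 1) - x ^ (k + 1) / (k + 1)) / (k + 1)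
  have hG_cont : ContinuousOn G (Icc 0 1) := by
    have hG : G = fun x => (x ^ k * (x * log x)
        + (∑ j ∈ range (k + 1), x ^ j) * ((1 - x) * log (1 - x))
        + ∑ j ∈ range (k + 1), x ^ (j + 1) / (j + 1) - x ^ (k + 1) / (k + 1)) / (k + 1) := by
      funext x
      simp only [G]
      rw [← geom_sum_mul]
      ring
    rw [hG]
    have h_mul_log : Continuous fun x : ℝ => x * log x := continuous_mul_log
    exact Continuous.continuousOn (by fun_prop)
  have hG_deriv : ∀ x ∈ Ioo (0 : ℝ) 1, HasDerivAt G (x ^ k * (log x - log (1 - x))) x := by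
    rintro x ⟨hx0, hx1⟩
    have h1x : 1 - x ≠ 0 := by linarith
    have h := ((((hasDerivAt_pow (k + 1) x).mul (hasDerivAt_log hx0.ne')).sub
      (((hasDerivAt_pow (k + 1) x).sub_const 1).mul (((hasDerivAt_id x).const_sub 1).log h1x))).add
      (HasDerivAt.fun_sum (u := range (k + 1)) fun j _ =>
        (hasDerivAt_pow (j + 1) x).div_const ((j : ℝ) + 1))).sub
      ((hasDerivAt_pow (k + 1) x).div_const ((k : ℝ) + 1)) |>.div_const ((k : ℝ) + 1)
    refine h.congr_deriv ?_
    have hgeom := geom_sum_mul x (k + 1)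
    have hsum : ∑ j ∈ range (k + 1), (↑(j + 1) * x ^ (j + 1 - 1)) / ((j : ℝ) + 1)
        = ∑ j ∈ range (k + 1), x ^ j := by
      refine Finset.sum_congr rfl fun j _ => ?_
      push_cast
      field_simp
    rw [hsum]
    simp only [id]
    field_simp
    push_cast
    rw [← hgeom]
    ring
  rw [intervalIntegral.integral_eq_sub_of_hasDeriv_right_of_le zero_le_one hG_cont
    (fun x hx => (hG_deriv x hx).hasDerivWithinAt)
    ((intervalIntegrable_log_sub_log_one_sub 0 1).continuousOn_mul (by fun_prop))]
  simp only [G, harmonic, Finset.sum_range_succ]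
  push_cast
  simp

theorem integral_pow_mul_cubic_kernel (c : ℕ → ℝ) (i : ℕ) :
    ∫ x in (0 : ℝ)..1, x ^ i * ((c 1 + 2 * c 2 * x + 3 * c 3 * x ^ 2) * (log x - log (1 - x))
        - (c 2 + c 3 / 2 + 2 * c 3 * x))
      = c 1 * (harmonic i / (i + 1)) + 2 * c 2 * (harmonic (i + 1) / (i + 2))
        + 3 * c 3 * (harmonic (i + 2) / (i + 3))
        - (c 2 + c 3 / 2) / (i + 1) - 2 * c 3 / (i + 2) := by
  have hL : ∀ k : ℕ, IntervalIntegrable (fun x : ℝ => x ^ k * (log x - log (1 - x))) volume 0 1 :=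
    fun k => (intervalIntegrable_log_sub_log_one_sub 0 1).continuousOn_mul (by fun_prop)
  have hP : ∀ k : ℕ, IntervalIntegrable (fun x : ℝ => x ^ k) volume 0 1 :=
    fun k => (continuous_pow k).intervalIntegrable 0 1
  have h_expand : (fun x : ℝ => x ^ i * ((c 1 + 2 * c 2 * x + 3 * c 3 * x ^ 2)
        * (log x - log (1 - x)) - (c 2 + c 3 / 2 + 2 * c 3 * x)))
      = fun x => c 1 * (x ^ i * (log x - log (1 - x)))
        + 2 * c 2 * (x ^ (i + 1) * (log x - log (1 - x)))
        + 3 * c 3 * (x ^ (i + 2) * (log x - log (1 - x)))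
        - ((c 2 + c 3 / 2) * x ^ i + 2 * c 3 * x ^ (i + 1)) := by
    funext x; ring
  rw [h_expand,
    intervalIntegral.integral_sub ((((hL i).const_mul _).add ((hL _).const_mul _)).add
      ((hL _).const_mul _)) (((hP i).const_mul _).add ((hP _).const_mul _)),
    intervalIntegral.integral_add (((hL i).const_mul _).add ((hL _).const_mul _))
      ((hL _).const_mul _),
    intervalIntegral.integral_add ((hL i).const_mul _) ((hL _).const_mul _),
    intervalIntegral.integral_add ((hP i).const_mul _) ((hP _).const_mul _)]
  simp only [intervalIntegral.integral_const_mul, integral_pow_mul_log_sub_log_one_sub,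
    integral_pow]
  push_cast
  ring

/-- `J(ℓ, ℓ')` when `P_ℓ(1 - 2x) = ∑_{i<n} dᵢ xⁱ` and `P_ℓ'(1 - 2x) = ∑_{k<4} c_k xᵏ`: the
`i`-th summand is `∫₀¹ xⁱ K(x) dx` for the inner principal value `K` of `isJ_cubicJ`. -/
noncomputable def cubicJ (n : ℕ) (d c : ℕ → ℝ) : ℝ :=
  ∑ i ∈ range n, d i * (c 1 * (harmonic i / (i + 1)) + 2 * c 2 * (harmonic (i + 1) / (i + 2))
    + 3 * c 3 * (harmonic (i + 2) / (i + 3)) - (c 2 + c 3 / 2) / (i + 1) - 2 * c 3 / (i + 2))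

theorem isJ_cubicJ {ℓ ℓ' n : ℕ} {d c : ℕ → ℝ}
    (hp : ∀ x, legendreP ℓ (1 - 2 * x) = ∑ i ∈ range n, d i * x ^ i)
    (hf : ∀ x, legendreP ℓ' (1 - 2 * x) = ∑ k ∈ range 4, c k * x ^ k) :
    IsJ ℓ ℓ' (cubicJ n d c) := by
  set K : ℝ → ℝ := fun x => (c 1 + 2 * c 2 * x + 3 * c 3 * x ^ 2) * (log x - log (1 - x))
    - (c 2 + c 3 / 2 + 2 * c 3 * x)
  have hK : ∀ i : ℕ, IntervalIntegrable (fun x => x ^ i * K x) volume 0 1 := fun i =>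
    (((intervalIntegrable_log_sub_log_one_sub 0 1).continuousOn_mul (by fun_prop)).sub
      ((by fun_prop : Continuous _).intervalIntegrable 0 1)).continuousOn_mul (by fun_prop)
  refine ⟨fun x => ∑ i ∈ range n, d i * (x ^ i * K x), ?_, ?_, ?_⟩
  · intro x₁ hx₁
    convert tendsto_integral_Ioo_diff_Ioo_inv_sub_add_linear hx₁
      (legendreP ℓ (1 - 2 * x₁) * (c 1 + 2 * c 2 * x₁ + 3 * c 3 * x₁ ^ 2))
      (-(legendreP ℓ (1 - 2 * x₁) * (c 2 + 2 * c 3 * x₁))) (-(legendreP ℓ (1 - 2 * x₁) * c 3))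
      (fun x₂ _ hne => ?_) using 2
    · simp only [K, hp, sub_zero, one_pow, ← sum_mul, ← mul_assoc]
      ring
    · have h : x₁ - x₂ ≠ 0 := sub_ne_zero.mpr (Ne.symm hne)
      simp only [hf, sum_range_succ, sum_range_zero]
      field_simp
      ring
  · exact integrable_finsetSum _ fun i _ =>
      ((intervalIntegrable_iff_integrableOn_Ioo_of_le zero_le_one).mp (hK i)).const_mul (d i)
  · rw [← integral_Ioc_eq_integral_Ioo, ← intervalIntegral.integral_of_le zero_le_one,
      intervalIntegral.integral_finsetSum fun i _ => (hK i).const_mul (d i)]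
    simp only [intervalIntegral.integral_const_mul, K, integral_pow_mul_cubic_kernel, cubicJ]

/-- The truncated lightcone Hamiltonian of 2D large-`N_c` QCD at `Δ_max = 4`,
in units of `g²N_c/π`: for `ℓ, ℓ' ∈ {0,1,2,3}`, the quantity
`√((2ℓ+1)(2ℓ'+1))·J(ℓ,ℓ')` equals the `(ℓ,ℓ')` entry of the matrix
`((0,0,0,0),(0,6,0,√(7/3)),(0,0,15,0),(0,√(7/3),0,77/3))`. -/
theorem J_matrix_deltaMax_four :
    ∀ ℓ ℓ' : Fin 4, ∃ v : ℝ, IsJ ℓ ℓ' v ∧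
      Real.sqrt ((2 * (ℓ : ℝ) + 1) * (2 * (ℓ' : ℝ) + 1)) * v =
        (!![0, 0, 0, 0;
            0, 6, 0, Real.sqrt (7 / 3);
            0, 0, 15, 0;
            0, Real.sqrt (7 / 3), 0, 77 / 3] : Matrix (Fin 4) (Fin 4) ℝ) ℓ ℓ' := by
  have h_sqrt : √21 * (1 / 3) = √7 / √3 := by
    rw [show (21 : ℝ) = 7 * 3 by norm_num, Real.sqrt_mul (by norm_num)]
    field_simp
    norm_num
  intro ℓ ℓ'
  refine ⟨_, isJ_cubicJ (legendreP_one_sub_two_mul_eq_sum ℓ.isLt)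
    (legendreP_one_sub_two_mul_eq_sum ℓ'.isLt), ?_⟩
  fin_cases ℓ <;> fin_cases ℓ' <;>
    norm_num [cubicJ, sum_range_succ, coeff_shiftedLegendre, harmonic, Nat.choose, h_sqrt]
end
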